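/- For every integer d ≥ 1 and integers a₁, …, a_d, let V_d be the 2d×2d matrix built from the 2×2 diagonal blocks with rows (−1,−1),(0,a₁) for the first block and (0,−1),(0,a_k) for blocks k = 2,…,d, with a single entry 1 placed at positions (2k, 2k+1) and (2k+1, 2k) linking consecutive blocks. Then det(V_d − t·V_dᵀ) = t^d · ∇(z) where z² = (t−1)²/t and ∇(z) = 1 − a₁z² + a₂z⁴ − ⋯ + (−1)^d a_d z^{2d}. -/

import Mathlib

open Polynomial Matrix

/-!
`V - t Vᵀ` is tridiagonal, so its leading principal minors `D n` satisfy the continuant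
recurrence `D (n + 2) = b (n + 1) D (n + 1) - c n e n D n`. For the Tsutsumi–Yamada matrix the
diagonal is `t - 1, a₁ (1 - t), 0, a₂ (1 - t), 0, …` and `c n e n` is `-t` for even `n` and
`(1 - t)²` for odd `n`. Hence the odd minors are `D (2k + 1) = (-1)ᵏ (t - 1)^(2k + 1)`, and the
even ones satisfy `D (2k + 2) = t D (2k) + (-1)^(k + 1) a_{k+1} (t - 1)^(2k + 2)`, which is the
recursion of the normalized Conway polynomial.
-/

/-- The Tsutsumi–Yamada Seifert matrix `V_d` (0-indexed): `V[0,0] = V[0,1] = −1`;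
for `k = 1,…,d`, `V[2k−1,2k−1] = a k`; for `k = 1,…,d−1`, `V[2k−1,2k] = 1`,
`V[2k,2k−1] = 1` and `V[2k,2k+1] = −1`; all other entries vanish. -/
def TYMatrix (d : ℕ) (a : ℕ → ℤ) : Matrix (Fin (2 * d)) (Fin (2 * d)) ℤ :=
  Matrix.of fun i j =>
    if i = j then
      (if i.val = 0 then -1 else if i.val % 2 = 1 then a ((i.val + 1) / 2) else 0)
    else if j.val = i.val + 1 then (if i.val % 2 = 0 then -1 else 1)
    else if i.val = j.val + 1 ∧ j.val % 2 = 1 then 1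
    else 0

namespace Matrix

variable {R : Type*} [CommRing R]

theorem det_succ_of_last_row_eq_zero {n : ℕ} (M : Matrix (Fin (n + 1)) (Fin (n + 1)) R)
    (h : ∀ j : Fin n, M (Fin.last n) j.castSucc = 0) :
    M.det = M (Fin.last n) (Fin.last n) * (M.submatrix Fin.castSucc Fin.castSucc).det := by
  rw [det_succ_row M (Fin.last n), Fin.sum_univ_castSucc]
  simp [h, Fin.succAbove_last, ← two_mul, pow_mul]

theorem det_succ_of_last_col_eq_zero {n : ℕ} (M : Matrix (Fin (n + 1)) (Fin (n + 1)) R)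
    (h : ∀ i : Fin n, M i.castSucc (Fin.last n) = 0) :
    M.det = M (Fin.last n) (Fin.last n) * (M.submatrix Fin.castSucc Fin.castSucc).det := by
  have := det_succ_of_last_row_eq_zero Mᵀ h
  rwa [det_transpose, transpose_apply, ← transpose_submatrix, det_transpose] at this

def tridiagonal (b c e : ℕ → R) (n : ℕ) : Matrix (Fin n) (Fin n) R :=
  of fun i j =>
    if (i : ℕ) = j then b i
    else if (j : ℕ) = i + 1 then c i
    else if (i : ℕ) = j + 1 then e j
    else 0

variable (b c e : ℕ → R)

theorem tridiagonal_submatrix_castSucc (n : ℕ) :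
    (tridiagonal b c e (n + 1)).submatrix Fin.castSucc Fin.castSucc = tridiagonal b c e n := by
  ext i j
  simp [tridiagonal]

theorem tridiagonal_apply_eq_zero {n : ℕ} {i j : Fin n} (h : (i : ℕ) + 1 < j ∨ (j : ℕ) + 1 < i) :
    tridiagonal b c e n i j = 0 := by
  simp only [tridiagonal, of_apply]
  rw [if_neg, if_neg, if_neg] <;> omega

theorem det_tridiagonal_succ_succ (n : ℕ) :
    (tridiagonal b c e (n + 2)).det
      = b (n + 1) * (tridiagonal b c e (n + 1)).det - c n * e n * (tridiagonal b c e n).det := by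
  -- The minor of the entry `e n` has last column `(0, …, 0, c n)`.
  have hminor : ((tridiagonal b c e (n + 2)).submatrix Fin.castSucc
      (Fin.last n).castSucc.succAbove).det = c n * (tridiagonal b c e n).det := by
    rw [det_succ_of_last_col_eq_zero]
    · congr 1
      · simp [tridiagonal, Fin.succAbove]
      · congr 1
        ext i j
        simp [tridiagonal, Fin.succAbove]
    · intro i
      refine tridiagonal_apply_eq_zero _ _ _ (.inl ?_)
      simp [Fin.succAbove]
  rw [det_succ_row _ (Fin.last (n + 1)), Fin.sum_univ_castSucc, Fin.sum_univ_castSucc,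
    Finset.sum_eq_zero]
  · have hlast : tridiagonal b c e (n + 2) (Fin.last (n + 1)) (Fin.last (n + 1)) = b (n + 1) := by
      simp [tridiagonal]
    have hsub : tridiagonal b c e (n + 2) (Fin.last (n + 1)) (Fin.last n).castSucc = e n := by
      simp only [tridiagonal, of_apply, Fin.val_last, Fin.val_castSucc]
      rw [if_neg (by omega), if_neg (by omega), if_pos trivial]
    rw [Fin.succAbove_last, tridiagonal_submatrix_castSucc, hminor, hlast, hsub]
    simp only [Fin.val_last, Fin.val_castSucc, Odd.neg_one_pow (⟨n, by ring⟩ : Odd (n + 1 + n)),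
      Even.neg_one_pow (⟨n + 1, rfl⟩ : Even (n + 1 + (n + 1)))]
    ring
  · intro j _
    rw [tridiagonal_apply_eq_zero _ _ _ (.inr (by simp)), mul_zero, zero_mul]

theorem tridiagonal_transpose (n : ℕ) : (tridiagonal b c e n)ᵀ = tridiagonal b e c n := by
  ext i j
  simp only [tridiagonal, transpose_apply, of_apply]
  split_ifs <;> first | rfl | omega | congr 1

theorem tridiagonal_map_C_sub_X_smul_transpose (n : ℕ) :
    (tridiagonal b c e n).map C - (X : R[X]) • (tridiagonal b c e n)ᵀ.map C
      = tridiagonal (fun i => C (b i) * (1 - X)) (fun i => C (c i) - X * C (e i))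
          (fun i => C (e i) - X * C (c i)) n := by
  rw [tridiagonal_transpose]
  refine Matrix.ext fun i j => ?_
  simp only [tridiagonal, sub_apply, map_apply, smul_apply, of_apply, smul_eq_mul, apply_ite C,
    map_zero]
  split_ifs <;> ring

end Matrix

def tyDiag (a : ℕ → ℤ) (i : ℕ) : ℤ :=
  if i = 0 then -1 else if i % 2 = 1 then a ((i + 1) / 2) else 0

def tySuper (i : ℕ) : ℤ := if i % 2 = 0 then -1 else 1

def tySub (i : ℕ) : ℤ := if i % 2 = 0 then 0 else 1

section Parity

variable (a : ℕ → ℤ) (k : ℕ)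

theorem tyDiag_two_mul_add_one : tyDiag a (2 * k + 1) = a (k + 1) := by
  rw [tyDiag, if_neg (by omega), if_pos (by omega), show (2 * k + 1 + 1) / 2 = k + 1 by omega]

theorem tyDiag_two_mul_succ : tyDiag a (2 * (k + 1)) = 0 := by
  simp [tyDiag]

theorem tySuper_two_mul : tySuper (2 * k) = -1 := by simp [tySuper]

theorem tySuper_two_mul_add_one : tySuper (2 * k + 1) = 1 := by simp [tySuper]

theorem tySub_two_mul : tySub (2 * k) = 0 := by simp [tySub]

theorem tySub_two_mul_add_one : tySub (2 * k + 1) = 1 := by simp [tySub]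

end Parity

theorem TYMatrix_eq_tridiagonal (d : ℕ) (a : ℕ → ℤ) :
    TYMatrix d a = tridiagonal (tyDiag a) tySuper tySub (2 * d) := by
  ext i j
  simp only [TYMatrix, tridiagonal, tyDiag, tySuper, tySub, of_apply, Fin.ext_iff]
  split_ifs <;> first | rfl | omega

noncomputable def tyAlexanderPoly (a : ℕ → ℤ) (d : ℕ) : ℤ[X] :=
  ∑ i ∈ Finset.range (d + 1), (-1) ^ i * C (a i) * (X - 1) ^ (2 * i) * X ^ (d - i)

theorem tyAlexanderPoly_succ (a : ℕ → ℤ) (d : ℕ) :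
    tyAlexanderPoly a (d + 1)
      = X * tyAlexanderPoly a d + (-1) ^ (d + 1) * C (a (d + 1)) * (X - 1) ^ (2 * (d + 1)) := by
  rw [tyAlexanderPoly, Finset.sum_range_succ, tyAlexanderPoly, Finset.mul_sum, Nat.sub_self,
    pow_zero, mul_one]
  congr 1
  refine Finset.sum_congr rfl fun i hi => ?_
  rw [Nat.sub_add_comm (Finset.mem_range_succ_iff.mp hi), pow_succ]
  ring

noncomputable def tyAlexanderMatrix (a : ℕ → ℤ) (n : ℕ) : Matrix (Fin n) (Fin n) ℤ[X] :=
  tridiagonal (fun i => C (tyDiag a i) * (1 - X)) (fun i => C (tySuper i) - X * C (tySub i))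
    (fun i => C (tySub i) - X * C (tySuper i)) n

theorem det_tyAlexanderMatrix (a : ℕ → ℤ) (ha : a 0 = 1) (k : ℕ) :
    (tyAlexanderMatrix a (2 * k)).det = tyAlexanderPoly a k ∧
      (tyAlexanderMatrix a (2 * k + 1)).det = (-1) ^ k * (X - 1) ^ (2 * k + 1) := by
  induction k with
  | zero =>
    refine ⟨by simp [tyAlexanderPoly, ha], ?_⟩
    simp [tyAlexanderMatrix, tridiagonal, tyDiag]
  | succ k ih =>
    have heven : (tyAlexanderMatrix a (2 * (k + 1))).det = tyAlexanderPoly a (k + 1) := by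
      rw [show 2 * (k + 1) = 2 * k + 2 by ring, tyAlexanderMatrix, det_tridiagonal_succ_succ,
        ← tyAlexanderMatrix, ← tyAlexanderMatrix, ih.1, ih.2, tyAlexanderPoly_succ]
      simp only [tyDiag_two_mul_add_one, tySuper_two_mul, tySub_two_mul, map_neg, map_one,
        map_zero]
      ring
    refine ⟨heven, ?_⟩
    rw [show 2 * (k + 1) + 1 = 2 * k + 1 + 2 by ring, tyAlexanderMatrix, det_tridiagonal_succ_succ,
      ← tyAlexanderMatrix, ← tyAlexanderMatrix, show 2 * k + 1 + 1 = 2 * (k + 1) by ring, heven,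
      ih.2]
    simp only [tyDiag_two_mul_succ, tySuper_two_mul_add_one, tySub_two_mul_add_one, map_one,
      map_zero]
    ring

theorem stmt_7_general (d : ℕ) (a : ℕ → ℤ) (ha : a 0 = 1) :
    Matrix.det ((TYMatrix d a).map Polynomial.C
        - (Polynomial.X : Polynomial ℤ) • ((TYMatrix d a)ᵀ.map Polynomial.C))
      = ∑ i ∈ Finset.range (d + 1),
          (-1) ^ i * Polynomial.C (a i) * (Polynomial.X - 1) ^ (2 * i)
            * Polynomial.X ^ (d - i) := by
  rw [TYMatrix_eq_tridiagonal, tridiagonal_map_C_sub_X_smul_transpose]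
  exact (det_tyAlexanderMatrix a ha d).1

/-- `det(V_d − t·V_dᵀ) = Σ_{i=0}^d (−1)^i a_i (t−1)^{2i} t^{d−i}` in `ℤ[t]`,
with `a₀ = 1`; equivalently `t^{−d} det(V_d − tV_dᵀ)` is the Conway polynomial
`1 − a₁z² + a₂z⁴ − ⋯ + (−1)^d a_d z^{2d}` under `z² = (t−1)²/t`. -/
theorem stmt_7 (d : ℕ) (hd : 1 ≤ d) (a : ℕ → ℤ) (ha : a 0 = 1) :
    Matrix.det ((TYMatrix d a).map Polynomial.C
        - (Polynomial.X : Polynomial ℤ) • ((TYMatrix d a)ᵀ.map Polynomial.C))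
      = ∑ i ∈ Finset.range (d + 1),
          (-1) ^ i * Polynomial.C (a i) * (Polynomial.X - 1) ^ (2 * i)
            * Polynomial.X ^ (d - i) :=
  stmt_7_general d a ha
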